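/- arXiv:1306.1360 — 2 statements merged into one kernel-verified Lean document; each statement's English description precedes it below -/
import Mathlib

section
/- Let C ⊆ {0,1}^n be a linear code with dual distance Γ and |C| ≤ 2^{n/64}, and let C' ⊆ C. If C is C'-partially testable with q adaptive queries (for some ε < 1/8), then |C'| ≤ |C|·2^{−⌊Γ/(32q)⌋}. -/
/-!
Let `g x` be the probability that the tester accepts `x` and `k = ⌊Γ / (32 q)⌋`. Then `g x ^ k`
is the acceptance probability of `k` independent runs, which read `k q < Γ` bits of `x` in total.
Any fewer than `Γ` coordinates of a uniform codeword of a linear code of dual distance `Γ` are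
uniformly distributed, so the average of `g ^ k` over `C` equals its average over all of
`{0,1}^n`. On `C'` we have `g ≥ 2/3`; on words that are `ε`-far from `C` we have `g ≤ 1/3`; and
the remaining words lie within distance `n / 8` of `C`, so there are at most `|C|` times the volume
of a Hamming ball of radius `n / 8` of them, which is tiny since `|C| ≤ 2 ^ (n / 64)`. Comparing
the two averages gives `|C'| 2 ^ k < |C| + 1`.
-/

open Finset
open scoped Classical

/-- The reading of input `x ∈ {0,1}^n` according to a `q`-reader `r`:
`y_{i+1} = x_{r_i(y_1,…,y_i)}`. -/
def readQ {n q : ℕ} (r : (i : Fin q) → (Fin (i : ℕ) → ZMod 2) → Fin n)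
    (x : Fin n → ZMod 2) (i : Fin q) : ZMod 2 :=
  x (r i (fun k => readQ r x ⟨k.1, k.2.trans i.2⟩))
termination_by i.1
decreasing_by exact k.2

theorem AddMonoidHom.sum_comp_of_surjective {A B M : Type*} [AddGroup A] [Fintype A]
    [AddMonoid B] [Fintype B] [DecidableEq B] [AddCommMonoid M] (φ : A →+ B)
    (hφ : Function.Surjective φ) (F : B → M) :
    ∑ a, F (φ a) = #{a | φ a = 0} • ∑ b, F b := by
  rw [← Finset.sum_fiberwise' univ φ, Finset.smul_sum]
  refine Finset.sum_congr rfl fun b _ => ?_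
  rw [Finset.sum_const, AddMonoidHom.card_fiber_eq_of_mem_range φ (hφ b) (hφ 0)]

section LocallyDetermined

variable {α β τ : Type*}

def LocallyDetermined (T : (α → β) → τ) (m : ℕ) : Prop :=
  ∀ w, ∃ S : Finset α, #S ≤ m ∧ ∀ x y, (∀ i ∈ S, x i = y i) → T x = w → T y = w

theorem LocallyDetermined.pi {J : Type*} [Fintype J] {T : J → (α → β) → τ} {m : ℕ}
    (hT : ∀ j, LocallyDetermined (T j) m) :
    LocallyDetermined (fun x j => T j x) (Fintype.card J * m) := by
  intro w
  choose S hSm hS using fun j => hT j (w j)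
  refine ⟨univ.biUnion S, ?_, fun x y hxy hx => funext fun j => hS j x y
    (fun i hi => hxy i (mem_biUnion.2 ⟨j, mem_univ j, hi⟩)) (congrFun hx j)⟩
  calc #(univ.biUnion S) ≤ ∑ j, #(S j) := card_biUnion_le
    _ ≤ Fintype.card J * m := by simpa using sum_le_card_nsmul univ _ m fun j _ => hSm j

end LocallyDetermined

theorem readQ_eq_iff {n q : ℕ} (r : (i : Fin q) → (Fin (i : ℕ) → ZMod 2) → Fin n)
    (x : Fin n → ZMod 2) (w : Fin q → ZMod 2) :
    readQ r x = w ↔ ∀ i : Fin q, x (r i (fun k => w ⟨k.1, k.2.trans i.2⟩)) = w i := by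
  constructor
  · rintro rfl i
    rw [readQ]
  · intro hw
    funext ⟨i, hi⟩
    induction i using Nat.strong_induction_on with
    | _ i ih =>
      rw [readQ, ← hw ⟨i, hi⟩]
      congr 2
      funext k
      exact ih k k.2 _

theorem locallyDetermined_readQ {n q : ℕ}
    (r : (i : Fin q) → (Fin (i : ℕ) → ZMod 2) → Fin n) : LocallyDetermined (readQ r) q := by
  intro w
  refine ⟨univ.image fun i => r i (fun k => w ⟨k, k.2.trans i.2⟩),
    card_image_le.trans (by simp), fun x y hxy hx => ?_⟩
  rw [readQ_eq_iff] at hx ⊢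
  intro i
  rw [← hxy _ (mem_image_of_mem _ (mem_univ i))]
  exact hx i

section Code

variable {K α : Type*} [Field K] [DecidableEq K] [Fintype α] [DecidableEq α]

def HasDualDistanceAtLeast (C : Submodule K (α → K)) (Γ : ℕ) : Prop :=
  ∀ y : α → K, y ≠ 0 → (∀ c ∈ C, ∑ i, y i * c i = 0) → Γ ≤ #{i | y i ≠ 0}

namespace HasDualDistanceAtLeast

variable {C : Submodule K (α → K)} {Γ : ℕ}

/-- Restricting `C` to fewer than `Γ` coordinates is onto: a linear form on `S → K` killing the
restrictions of `C` would be a nonzero dual codeword supported on `S`. -/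
theorem surjective_restrict (hC : HasDualDistanceAtLeast C Γ) {S : Finset α} (hS : #S < Γ) :
    Function.Surjective ((LinearMap.funLeft K K ((↑) : S → α)).comp C.subtype) := by
  set ρ := LinearMap.funLeft K K ((↑) : S → α)
  have hρ : Function.Surjective ρ :=
    LinearMap.funLeft_surjective_of_injective _ _ _ Subtype.val_injective
  rw [← LinearMap.range_eq_top]
  by_contra hne
  obtain ⟨f, hf, hfC⟩ :=
    Submodule.exists_dual_map_eq_bot_of_lt_top (lt_top_iff_ne_top.2 hne) inferInstance
  set y : α → K := fun i => f (ρ fun j => if i = j then 1 else 0)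
  have hfy : ∀ x, f (ρ x) = ∑ i, y i * x i := fun x => by
    rw [← LinearMap.comp_apply, LinearMap.pi_apply_eq_sum_univ]
    simp only [smul_eq_mul, mul_comm, LinearMap.comp_apply, y]
  have hyC : ∀ c ∈ C, ∑ i, y i * c i = 0 := fun c hc => by
    rw [← hfy, ← Submodule.mem_bot K, ← hfC]
    exact Submodule.mem_map_of_mem (LinearMap.mem_range_self (ρ ∘ₗ C.subtype) ⟨c, hc⟩)
  have hy : y ≠ 0 := by
    intro hy0
    refine hf (LinearMap.ext fun u => ?_)
    obtain ⟨x, rfl⟩ := hρ u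
    simp [hfy, hy0]
  have hsupp : #{i | y i ≠ 0} ≤ #S := by
    refine card_le_card fun i hi => ?_
    by_contra hiS
    refine (Finset.mem_filter.1 hi).2 ?_
    have : (ρ fun j => if i = j then (1 : K) else 0) = 0 := by
      funext j
      exact if_neg fun h : i = j => hiS (h ▸ j.2)
    simp [y, this]
  exact absurd (hC y hy hyC) (by omega)

theorem eq_top_of_card_lt (hC : HasDualDistanceAtLeast C Γ) (hΓ : Fintype.card α < Γ) :
    C = ⊤ := by
  refine Submodule.eq_top_iff'.2 fun x => ?_
  obtain ⟨c, hc⟩ := hC.surjective_restrict (S := univ) (by simpa using hΓ)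
    (LinearMap.funLeft K K (↑) x)
  convert c.2
  funext i
  exact (congrFun hc ⟨i, mem_univ i⟩).symm

variable [Fintype K]

theorem le_card_of_natCard_lt (hC : HasDualDistanceAtLeast C Γ)
    (hlt : Nat.card C < Fintype.card K ^ Fintype.card α) : Γ ≤ Fintype.card α := by
  by_contra h
  rw [hC.eq_top_of_card_lt (not_le.1 h), Nat.card_congr Submodule.topEquiv.toEquiv,
    Nat.card_eq_fintype_card, Fintype.card_fun] at hlt
  exact lt_irrefl _ hlt

variable {M : Type*} [AddCommMonoid M]

theorem card_pow_smul_sum_eq (hC : HasDualDistanceAtLeast C Γ) {S : Finset α} (hS : #S < Γ)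
    (F : (α → K) → M) (hF : ∀ x y, (∀ i ∈ S, x i = y i) → F x = F y) :
    Fintype.card K ^ Fintype.card α • ∑ x : C, F x = Nat.card C • ∑ x, F x := by
  set ρ := LinearMap.funLeft K K ((↑) : S → α)
  have hρ : Function.Surjective ρ :=
    LinearMap.funLeft_surjective_of_injective _ _ _ Subtype.val_injective
  set G := F ∘ Function.surjInv hρ
  have hFG : ∀ x, F x = G (ρ x) := fun x =>
    hF _ _ fun i hi => (congrFun (Function.surjInv_eq hρ (ρ x)) ⟨i, hi⟩).symm
  have hsurjC := hC.surjective_restrict hS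
  have hsumC := (ρ.comp C.subtype).toAddMonoidHom.sum_comp_of_surjective hsurjC G
  have hsumT := ρ.toAddMonoidHom.sum_comp_of_surjective hρ G
  have hcardC := (ρ.comp C.subtype).toAddMonoidHom.sum_comp_of_surjective hsurjC fun _ => 1
  have hcardT := ρ.toAddMonoidHom.sum_comp_of_surjective hρ fun _ => 1
  simp only [sum_const, card_univ, smul_eq_mul, mul_one, Fintype.card_fun] at hcardC hcardT
  simp only [hFG, LinearMap.toAddMonoidHom_coe, LinearMap.comp_apply, Submodule.subtype_apply]
    at hsumC hsumT hcardC hcardT ⊢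
  rw [hsumC, hsumT, hcardT, Nat.card_eq_fintype_card, hcardC, smul_smul, smul_smul]
  ring_nf

theorem card_pow_smul_sum_comp_eq (hC : HasDualDistanceAtLeast C Γ) {τ : Type*} [Fintype τ]
    {T : (α → K) → τ} {m : ℕ} (hT : LocallyDetermined T m) (hm : m < Γ) (Φ : τ → M) :
    Fintype.card K ^ Fintype.card α • ∑ x : C, Φ (T x) = Nat.card C • ∑ x, Φ (T x) := by
  have hΦ : ∀ x, Φ (T x) = ∑ w, if T x = w then Φ w else 0 := fun x => by simp
  simp only [hΦ]
  rw [sum_comm, smul_sum]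
  conv_rhs => rw [sum_comm, smul_sum]
  refine sum_congr rfl fun w _ => ?_
  obtain ⟨S, hSm, hS⟩ := hT w
  refine hC.card_pow_smul_sum_eq (hSm.trans_lt hm) (fun x => if T x = w then Φ w else 0)
    fun x y hxy => ?_
  rw [eq_iff_iff.2 ⟨hS x y hxy, hS y x fun i hi => (hxy i hi).symm⟩]

end HasDualDistanceAtLeast

end Code

section Hamming

variable {α : Type*} [Fintype α] [DecidableEq α]

theorem card_filter_hammingDist_le (c : α → ZMod 2) (m : ℕ) :
    #{z | hammingDist z c ≤ m} ≤ ∑ j ∈ range (m + 1), (Fintype.card α).choose j := by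
  calc #{z | hammingDist z c ≤ m}
      ≤ #((range (m + 1)).biUnion fun j => powersetCard j (univ : Finset α)) := by
        refine card_le_card_of_injOn (fun z => ({i | z i ≠ c i} : Finset α)) (fun z hz => ?_)
          fun z _ z' _ h => funext fun i => ?_
        · simpa [Nat.lt_succ_iff, hammingDist] using hz
        · have hi : z i ≠ c i ↔ z' i ≠ c i := by simpa using congrArg (i ∈ ·) h
          exact (by decide : ∀ a b d : ZMod 2, (a ≠ d ↔ b ≠ d) → a = b) _ _ _ hi
    _ ≤ ∑ j ∈ range (m + 1), #(powersetCard j (univ : Finset α)) := card_biUnion_le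
    _ = ∑ j ∈ range (m + 1), (Fintype.card α).choose j := by simp

theorem card_filter_exists_hammingDist_le (D : Finset (α → ZMod 2)) (m : ℕ) :
    #{z | ∃ c ∈ D, hammingDist z c ≤ m} ≤
      #D * ∑ j ∈ range (m + 1), (Fintype.card α).choose j := by
  calc #{z | ∃ c ∈ D, hammingDist z c ≤ m}
      ≤ #(D.biUnion fun c => {z | hammingDist z c ≤ m}) :=
        card_le_card fun z hz => by simpa using hz
    _ ≤ ∑ c ∈ D, #{z | hammingDist z c ≤ m} := card_biUnion_le
    _ ≤ _ := sum_le_card_nsmul _ _ _ fun c _ => card_filter_hammingDist_le c m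

end Hamming

theorem pow_le_two_rpow_mul {b c t : ℝ} {e : ℕ} (hb0 : 0 ≤ b) (hc : 0 ≤ c) (hb : b ≤ 2 ^ c)
    (he : (e : ℝ) ≤ t) : b ^ e ≤ 2 ^ (c * t) :=
  calc b ^ e ≤ ((2 : ℝ) ^ c) ^ e := pow_le_pow_left₀ hb0 hb e
    _ = 2 ^ (c * e) := by rw [← Real.rpow_natCast, ← Real.rpow_mul zero_le_two]
    _ ≤ 2 ^ (c * t) := Real.rpow_le_rpow_of_exponent_le one_le_two (by gcongr)

/-- Weight each `n.choose j`, `j ≤ m`, by `4 ^ (m - j) ≥ 1` and complete the binomial expansion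
of `(1 / 4 + 1) ^ n`. -/
theorem sum_range_choose_le {n m : ℕ} (hmn : m ≤ n) :
    ∑ j ∈ range (m + 1), (n.choose j : ℝ) ≤ 4 ^ m * (5 / 4) ^ n := by
  calc ∑ j ∈ range (m + 1), (n.choose j : ℝ)
      ≤ ∑ j ∈ range (m + 1), 4 ^ m * (1 / 4) ^ j * (n.choose j : ℝ) := by
        refine sum_le_sum fun j hj => le_mul_of_one_le_left (by positivity) ?_
        rw [one_div, inv_pow, ← div_eq_mul_inv, one_le_div (by positivity)]
        exact pow_le_pow_right₀ (by norm_num) (Nat.lt_succ_iff.1 (mem_range.1 hj))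
    _ ≤ ∑ j ∈ range (n + 1), 4 ^ m * (1 / 4) ^ j * (n.choose j : ℝ) :=
        sum_le_sum_of_subset_of_nonneg (range_subset_range.2 (by omega))
          fun _ _ _ => by positivity
    _ = 4 ^ m * (5 / 4) ^ n := by
        rw [show (5 / 4 : ℝ) = 1 / 4 + 1 by norm_num, add_pow, mul_sum]
        simp only [one_pow, mul_one, mul_assoc]

theorem sq_mul_sum_choose_mul_three_pow_lt {n k : ℕ} {N : ℝ} (hN0 : 0 ≤ N)
    (hN : N ≤ 2 ^ ((n : ℝ) / 64)) (hk : 32 * k ≤ n) (hn : 0 < n) :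
    N ^ 2 * (∑ j ∈ range (n / 8 + 1), (n.choose j : ℝ)) * 3 ^ k < 2 ^ n := by
  have hN2 : N ^ 2 ≤ 2 ^ ((n : ℝ) / 64 * 2) :=
    pow_le_two_rpow_mul hN0 (by positivity) hN (by norm_num)
  have h4 : (4 : ℝ) ^ (n / 8) ≤ 2 ^ (2 * ((n : ℝ) / 8)) :=
    pow_le_two_rpow_mul (by norm_num) (by norm_num) (by norm_num) Nat.cast_div_le
  have h54 : (5 / 4 : ℝ) ^ n ≤ 2 ^ (3⁻¹ * (n : ℝ)) :=
    pow_le_two_rpow_mul (by norm_num) (by norm_num)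
      ((Real.le_rpow_inv_iff_of_pos (by norm_num) (by norm_num) (by norm_num)).2 (by norm_num))
      le_rfl
  have h3 : (3 : ℝ) ^ k ≤ 2 ^ (2 * ((n : ℝ) / 32)) :=
    pow_le_two_rpow_mul (by norm_num) (by norm_num) (by norm_num)
      (by rw [le_div_iff₀ (by norm_num)]; exact_mod_cast (by omega : k * 32 ≤ n))
  calc N ^ 2 * (∑ j ∈ range (n / 8 + 1), (n.choose j : ℝ)) * 3 ^ k
      ≤ 2 ^ ((n : ℝ) / 64 * 2) * (2 ^ (2 * ((n : ℝ) / 8)) * 2 ^ (3⁻¹ * (n : ℝ))) *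
          2 ^ (2 * ((n : ℝ) / 32)) := by
        gcongr
        exact (sum_range_choose_le (Nat.div_le_self n 8)).trans (by gcongr)
    _ = 2 ^ ((65 / 96 : ℝ) * n) := by
        simp only [← Real.rpow_add two_pos]
        ring_nf
    _ < 2 ^ (n : ℝ) := by
        refine Real.rpow_lt_rpow_of_exponent_lt one_lt_two ?_
        have : (0 : ℝ) < n := Nat.cast_pos.2 hn
        linarith
    _ = 2 ^ n := Real.rpow_natCast 2 n

section Tester

variable {n q : ℕ} {ι : Type*} [Fintype ι] (μ : ι → ℝ)
  (r : ι → (i : Fin q) → (Fin (i : ℕ) → ZMod 2) → Fin n) (π : ι → (Fin q → ZMod 2) → Bool)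

def acceptProb (x : Fin n → ZMod 2) : ℝ :=
  ∑ i ∈ Finset.univ.filter fun i => π i (readQ (r i) x) = true, μ i

variable {μ}

theorem acceptProb_nonneg (hμ0 : ∀ i, 0 ≤ μ i) (x : Fin n → ZMod 2) :
    0 ≤ acceptProb μ r π x :=
  sum_nonneg fun i _ => hμ0 i

theorem acceptProb_le_one (hμ0 : ∀ i, 0 ≤ μ i) (hμ1 : ∑ i, μ i = 1) (x : Fin n → ZMod 2) :
    acceptProb μ r π x ≤ 1 :=
  hμ1 ▸ sum_le_sum_of_subset_of_nonneg (filter_subset _ _) fun i _ _ => hμ0 i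

theorem acceptProb_le_one_third (hμ1 : ∑ i, μ i = 1) {x : Fin n → ZMod 2}
    (hx : (2 : ℝ) / 3 ≤ ∑ i ∈ Finset.univ.filter fun i => π i (readQ (r i) x) = false, μ i) :
    acceptProb μ r π x ≤ 1 / 3 := by
  have := sum_filter_add_sum_filter_not univ (fun i => π i (readQ (r i) x) = true) μ
  simp only [Bool.not_eq_true] at this
  rw [acceptProb]
  linarith

theorem HasDualDistanceAtLeast.two_pow_mul_sum_acceptProb_pow
    {C : Submodule (ZMod 2) (Fin n → ZMod 2)} {Γ : ℕ} (hC : HasDualDistanceAtLeast C Γ) {k : ℕ}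
    (hk : k * q < Γ) :
    2 ^ n * ∑ x : C, acceptProb μ r π x ^ k = Nat.card C * ∑ x, acceptProb μ r π x ^ k := by
  have hpow : ∀ x, acceptProb μ r π x ^ k = ∑ t : Fin k → ι, (∏ j, μ (t j)) *
      ∏ j, if π (t j) (readQ (r (t j)) x) = true then (1 : ℝ) else 0 := fun x => by
    rw [acceptProb, sum_filter, Fintype.sum_pow]
    refine sum_congr rfl fun t _ => ?_
    rw [← prod_mul_distrib]
    simp only [mul_boole]
  simp only [hpow]
  rw [sum_comm, mul_sum]
  conv_rhs => rw [sum_comm, mul_sum]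
  refine sum_congr rfl fun t _ => ?_
  rw [← mul_sum, ← mul_sum, mul_left_comm, mul_left_comm (Nat.card C : ℝ)]
  congr 1
  have := hC.card_pow_smul_sum_comp_eq
    (LocallyDetermined.pi fun j => locallyDetermined_readQ (r (t j))) (by simpa using hk)
    fun W => ∏ j, if π (t j) (W j) = true then (1 : ℝ) else 0
  simp only [nsmul_eq_mul, Nat.cast_pow, Nat.cast_ofNat, ZMod.card, Fintype.card_fin] at this
  exact this

variable {r π}

theorem sum_three_mul_acceptProb_pow_le (hμ0 : ∀ i, 0 ≤ μ i) (hμ1 : ∑ i, μ i = 1) {ε : ℝ}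
    (hε : ε ≤ 1 / 8) (C : Submodule (ZMod 2) (Fin n → ZMod 2))
    (hrej : ∀ x : Fin n → ZMod 2, (∀ c ∈ C, ε * n < (hammingDist x c : ℝ)) →
      (2 : ℝ) / 3 ≤ ∑ i ∈ Finset.univ.filter fun i => π i (readQ (r i) x) = false, μ i)
    (k : ℕ) :
    ∑ x, (3 * acceptProb μ r π x) ^ k ≤
      2 ^ n + 3 ^ k * (Nat.card C * ∑ j ∈ range (n / 8 + 1), (n.choose j : ℝ)) := by
  set near : Finset (Fin n → ZMod 2) :=
    {z | ∃ c ∈ ({c | c ∈ C} : Finset _), hammingDist z c ≤ n / 8}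
  have hpt : ∀ x, (3 * acceptProb μ r π x) ^ k ≤ 1 + 3 ^ k * if x ∈ near then 1 else 0 := by
    intro x
    have h0 := acceptProb_nonneg r π hμ0 x
    by_cases hfar : ∀ c ∈ C, ε * n < (hammingDist x c : ℝ)
    · have := acceptProb_le_one_third r π hμ1 (hrej x hfar)
      have : (3 * acceptProb μ r π x) ^ k ≤ 1 := pow_le_one₀ (by positivity) (by linarith)
      have : (0 : ℝ) ≤ 3 ^ k * if x ∈ near then 1 else 0 := by positivity
      linarith
    · push Not at hfar
      obtain ⟨c, hc, hxc⟩ := hfar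
      have hxnear : x ∈ near := by
        simp only [near, mem_filter, mem_univ, true_and]
        refine ⟨c, hc, (Nat.le_div_iff_mul_le (by norm_num)).2 ?_⟩
        have : (hammingDist x c * 8 : ℝ) ≤ n := by nlinarith [(n.cast_nonneg : (0 : ℝ) ≤ n)]
        exact_mod_cast this
      rw [if_pos hxnear, mul_one, mul_pow]
      have := pow_le_one₀ h0 (acceptProb_le_one r π hμ0 hμ1 x) (n := k)
      nlinarith [pow_pos (three_pos (α := ℝ)) k]
  have hnear : (#near : ℝ) ≤ Nat.card C * ∑ j ∈ range (n / 8 + 1), (n.choose j : ℝ) := by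
    have hcard : #({c | c ∈ C} : Finset _) = Nat.card C := by
      rw [Nat.card_eq_fintype_card, Fintype.card_subtype]
    have := card_filter_exists_hammingDist_le ({c | c ∈ C} : Finset _) (n / 8)
    rw [Fintype.card_fin, hcard] at this
    exact_mod_cast this
  calc ∑ x, (3 * acceptProb μ r π x) ^ k ≤ ∑ x, (1 + 3 ^ k * if x ∈ near then 1 else 0) :=
        sum_le_sum fun x _ => hpt x
    _ = 2 ^ n + 3 ^ k * #near := by
        simp [sum_add_distrib, mul_comm]
    _ ≤ _ := by gcongr

theorem card_mul_two_pow_mul_two_pow_le (hμ0 : ∀ i, 0 ≤ μ i) (hμ1 : ∑ i, μ i = 1) {ε : ℝ}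
    (hε : ε ≤ 1 / 8) {Γ k : ℕ} {C : Submodule (ZMod 2) (Fin n → ZMod 2)}
    (hC : HasDualDistanceAtLeast C Γ) (hk : k * q < Γ)
    {C' : Finset (Fin n → ZMod 2)} (hC'C : ∀ x ∈ C', x ∈ C)
    (hacc : ∀ x ∈ C', (2 : ℝ) / 3 ≤ acceptProb μ r π x)
    (hrej : ∀ x : Fin n → ZMod 2, (∀ c ∈ C, ε * n < (hammingDist x c : ℝ)) →
      (2 : ℝ) / 3 ≤ ∑ i ∈ Finset.univ.filter fun i => π i (readQ (r i) x) = false, μ i) :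
    (#C' * 2 ^ k : ℝ) * 2 ^ n ≤
      Nat.card C *
        (2 ^ n + 3 ^ k * (Nat.card C * ∑ j ∈ range (n / 8 + 1), (n.choose j : ℝ))) := by
  set f := fun x => (3 * acceptProb μ r π x) ^ k
  have hf0 : ∀ x, 0 ≤ f x := fun x =>
    pow_nonneg (mul_nonneg zero_le_three (acceptProb_nonneg r π hμ0 x)) k
  have hcode : 2 ^ n * ∑ x : C, f x = Nat.card C * ∑ x, f x := by
    simp only [f, mul_pow, ← mul_sum]
    rw [mul_left_comm, hC.two_pow_mul_sum_acceptProb_pow r π hk, mul_left_comm]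
  calc (#C' * 2 ^ k : ℝ) * 2 ^ n ≤ (∑ x ∈ C', f x) * 2 ^ n := by
        gcongr
        rw [← nsmul_eq_mul]
        refine card_nsmul_le_sum C' f _ fun x hx => ?_
        exact pow_le_pow_left₀ (by norm_num) (by linarith [hacc x hx]) k
    _ ≤ (∑ x : C, f x) * 2 ^ n := by
        gcongr
        rw [← sum_subtype {x | x ∈ C} (by simp)]
        exact sum_le_sum_of_subset_of_nonneg (fun x hx => by simpa using hC'C x hx)
          fun x _ _ => hf0 x
    _ = Nat.card C * ∑ x, f x := by rw [mul_comm, hcode]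
    _ ≤ _ := by gcongr; exact sum_three_mul_acceptProb_pow_le hμ0 hμ1 hε C hrej k

end Tester

theorem stmt17_general {n Γ q : ℕ} (ε : ℝ) (hε : ε < 1 / 8)
    (C : Submodule (ZMod 2) (Fin n → ZMod 2))
    (hdual : ∀ y : Fin n → ZMod 2, y ≠ 0 → (∀ c ∈ C, ∑ i, y i * c i = 0) →
      Γ ≤ (Finset.univ.filter fun i => y i ≠ 0).card)
    (hsize : (Nat.card C : ℝ) ≤ 2 ^ ((n : ℝ) / 64))
    (C' : Finset (Fin n → ZMod 2)) (hC'C : ∀ x ∈ C', x ∈ C)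
    {ι : Type*} [Fintype ι] (μ : ι → ℝ) (hμ0 : ∀ i, 0 ≤ μ i) (hμ1 : ∑ i, μ i = 1)
    (r : ι → (i : Fin q) → (Fin (i : ℕ) → ZMod 2) → Fin n)
    (π : ι → (Fin q → ZMod 2) → Bool)
    (hacc : ∀ x ∈ C',
      (2 : ℝ) / 3 ≤ ∑ i ∈ Finset.univ.filter fun i => π i (readQ (r i) x) = true, μ i)
    (hrej : ∀ x : Fin n → ZMod 2, (∀ c ∈ C, ε * n < (hammingDist x c : ℝ)) →
      (2 : ℝ) / 3 ≤ ∑ i ∈ Finset.univ.filter fun i => π i (readQ (r i) x) = false, μ i) :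
    C'.card * 2 ^ (Γ / (32 * q)) ≤ Nat.card C := by
  set k := Γ / (32 * q) with hk
  obtain hk0 | hk0 := Nat.eq_zero_or_pos k
  · rw [hk0, pow_zero, mul_one, Nat.card_eq_fintype_card, Fintype.card_subtype]
    exact card_le_card fun x hx => by simpa using hC'C x hx
  have hq : 0 < q := Nat.pos_of_ne_zero fun hq => by simp [hk, hq] at hk0
  have hkq : k * (32 * q) ≤ Γ := Nat.div_mul_le_self Γ (32 * q)
  have hn : 0 < n := by
    obtain ⟨i, -, -⟩ := exists_ne_zero_of_sum_ne_zero (hμ1 ▸ one_ne_zero : ∑ i, μ i ≠ 0)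
    exact (r i ⟨0, hq⟩ finZeroElim).pos
  have hΓn : Γ ≤ n := by
    have hlt : (Nat.card C : ℝ) < 2 ^ n := hsize.trans_lt <| by
      rw [← Real.rpow_natCast]
      have : (0 : ℝ) < n := Nat.cast_pos.2 hn
      exact Real.rpow_lt_rpow_of_exponent_lt one_lt_two (by linarith)
    simpa using HasDualDistanceAtLeast.le_card_of_natCard_lt hdual
      (by simpa using (by exact_mod_cast hlt : Nat.card C < 2 ^ n))
  have hbound := card_mul_two_pow_mul_two_pow_le hμ0 hμ1 hε.le hdual
    (by nlinarith : k * q < Γ) hC'C hacc hrej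
  have hnum := sq_mul_sum_choose_mul_three_pow_lt (Nat.cast_nonneg _) hsize
    (by nlinarith : 32 * k ≤ n) hn
  have : (#C' * 2 ^ k : ℝ) * 2 ^ n < (Nat.card C + 1) * 2 ^ n := by linarith
  exact_mod_cast Nat.lt_succ_iff.1 (by exact_mod_cast lt_of_mul_lt_mul_right this (by positivity))

/-- adaptive lower bound, main theorem: let `C ⊆ {0,1}^n` be a linear code
with dual distance at least `Γ` and `|C| ≤ 2^{n/64}`, and let `C' ⊆ C`.  If `C` is
`C'`-partially testable with `q` adaptive queries for some `ε < 1/8` — i.e. there is a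
distribution `μ` over indices `i` of `q`-readers `r i` (adaptive strategies reading `q`
distinct bits) with acceptance predicates `π i` on the readings, accepting every `x ∈ C'`
with probability `≥ 2/3` and rejecting every `x` that is `ε`-far from `C` with probability
`≥ 2/3` — then `|C'| ≤ |C| · 2^{−⌊Γ/(32q)⌋}`. -/
theorem stmt17 {n Γ q : ℕ} (ε : ℝ) (hε : ε < 1 / 8)
    (C : Submodule (ZMod 2) (Fin n → ZMod 2))
    (hdual : ∀ y : Fin n → ZMod 2, y ≠ 0 → (∀ c ∈ C, ∑ i, y i * c i = 0) →
      Γ ≤ (Finset.univ.filter fun i => y i ≠ 0).card)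
    (hsize : (Nat.card C : ℝ) ≤ 2 ^ ((n : ℝ) / 64))
    (C' : Finset (Fin n → ZMod 2)) (hC'C : ∀ x ∈ C', x ∈ C)
    {ι : Type*} [Fintype ι] (μ : ι → ℝ) (hμ0 : ∀ i, 0 ≤ μ i) (hμ1 : ∑ i, μ i = 1)
    (r : ι → (i : Fin q) → (Fin (i : ℕ) → ZMod 2) → Fin n)
    (hnorep : ∀ t : ι, ∀ (i j : Fin q) (hij : (i : ℕ) < (j : ℕ)) (y : Fin (j : ℕ) → ZMod 2),
      r t i (fun k => y ⟨k.1, k.2.trans hij⟩) ≠ r t j y)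
    (π : ι → (Fin q → ZMod 2) → Bool)
    (hacc : ∀ x ∈ C',
      (2 : ℝ) / 3 ≤ ∑ i ∈ Finset.univ.filter fun i => π i (readQ (r i) x) = true, μ i)
    (hrej : ∀ x : Fin n → ZMod 2, (∀ c ∈ C, ε * n < (hammingDist x c : ℝ)) →
      (2 : ℝ) / 3 ≤ ∑ i ∈ Finset.univ.filter fun i => π i (readQ (r i) x) = false, μ i) :
    C'.card * 2 ^ (Γ / (32 * q)) ≤ Nat.card C :=
  stmt17_general ε hε C hdual hsize C' hC'C μ hμ0 hμ1 r π hacc hrej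
end

section
/- Let C' ⊆ {0,1}^n, J ⊆ [n], and for y in the image C'[J] let X_y be uniform on {c ∈ C' : c[J] = y}. Let r be any q-reader whose first |J| reads are exactly the coordinates of J. If for each y, the distribution of the last q−|J| read values of X_y under r is at total variation distance ≥ 1/8 from the uniform distribution on {0,1}^{q−|J|} (averaged appropriately), then for X uniform on C', H[first q read values of X] ≤ q − 1/32. -/
open Finset
open scoped Classical

/-- Base-2 Shannon entropy of a distribution on a finite type. -/
noncomputable def entropy2 {D : Type*} [Fintype D] (p : D → ℝ) : ℝ :=
  -∑ i, p i * Real.logb 2 (p i)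

/-- Total variation distance between two distributions on a finite type. -/
noncomputable def dTV {D : Type*} [Fintype D] (p q : D → ℝ) : ℝ :=
  (1 / 2) * ∑ i, |p i - q i|

/-- The reading of input `x ∈ {0,1}^n` according to a `q`-reader `r`. -/
def readB {n q : ℕ} (r : (i : Fin q) → (Fin (i : ℕ) → Bool) → Fin n)
    (x : Fin n → Bool) (i : Fin q) : Bool :=
  x (r i (fun k => readB r x ⟨k.1, k.2.trans i.2⟩))
termination_by i.1
decreasing_by exact k.2

/-!
Split the `q` read values into the first `|J|` and the last `q - |J|`. By the chain rule, the
entropy of the reading is the entropy of the prefix, at most `|J|`, plus the average over the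
prefix values `y` of the entropy of the suffix given `y`. Each of these conditional laws is
`1/8`-far from uniform on `2 ^ (q - |J|)` points, so Pinsker's inequality bounds its entropy by
`q - |J| - 2 (1/8)^2`. Pinsker's inequality against the uniform law reduces, by grouping the
points where `p ≥ 1/N` and where `p < 1/N`, to the two-point case.
-/

open Real

theorem two_mul_sq_le_binary_klDiv {a b : ℝ} (hb : 0 < b) (hba : b ≤ a) (ha : a ≤ 1) :
    2 * (a - b) ^ 2 ≤ a * (log a - log b) + (1 - a) * (log (1 - a) - log (1 - b)) := by
  set g : ℝ → ℝ := fun t => a * (log a - log t) + (1 - a) * (log (1 - a) - log (1 - t))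
    - 2 * (a - t) ^ 2
  -- `g` is the gap as a function of `b`; it vanishes at `b = a` and decreases on `(0, a]`.
  have hderiv : ∀ t ∈ Set.Ioo b a, HasDerivAt g ((t - a) * (1 / (t * (1 - t)) - 4)) t := by
    rintro t ⟨hbt, hta⟩
    have ht : 0 < t := hb.trans hbt
    have ht1 : 0 < 1 - t := by linarith
    refine (((((hasDerivAt_log ht.ne').const_sub (log a)).const_mul a).add
      ((((hasDerivAt_id t).const_sub 1).log ht1.ne').const_sub (log (1 - a)) |>.const_mul
        (1 - a))).sub (((hasDerivAt_id t).const_sub a).pow 2 |>.const_mul 2)).congr_deriv ?_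
    simp only [id]
    field_simp
    ring
  have hcont : ContinuousOn g (Set.Icc b a) := by
    have hlog : ContinuousOn (fun t => log t) (Set.Icc b a) :=
      continuousOn_log.mono fun t ht => (hb.trans_le ht.1).ne'
    have hlog1 : ContinuousOn (fun t => (1 - a) * (log (1 - a) - log (1 - t))) (Set.Icc b a) := by
      rcases ha.eq_or_lt with rfl | ha
      · simpa using continuousOn_const
      · refine continuousOn_const.mul (continuousOn_const.sub (continuousOn_log.comp
          (continuousOn_const.sub continuousOn_id) fun t ht => ?_))
        simp only [Set.mem_compl_iff, Set.mem_singleton_iff]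
        linarith [ht.2]
    exact ((continuousOn_const.mul (continuousOn_const.sub hlog)).add hlog1).sub (by fun_prop)
  have hanti : AntitoneOn g (Set.Icc b a) := by
    refine antitoneOn_of_hasDerivWithinAt_nonpos (convex_Icc b a) hcont
      (f' := fun t => (t - a) * (1 / (t * (1 - t)) - 4))
      (fun t ht => ?_) fun t ht => ?_ <;> rw [interior_Icc] at ht
    · exact (hderiv t ht).hasDerivWithinAt
    · obtain ⟨hbt, hta⟩ := ht
      have ht : 0 < t * (1 - t) := mul_pos (hb.trans hbt) (by linarith)
      have : 4 ≤ 1 / (t * (1 - t)) := by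
        rw [le_div_iff₀ ht]; nlinarith [sq_nonneg (2 * t - 1)]
      exact mul_nonpos_of_nonpos_of_nonneg (by linarith) (by linarith)
  have := hanti ⟨le_rfl, hba⟩ ⟨hba, le_rfl⟩ hba
  simp only [g, sub_self] at this
  linarith

theorem sum_negMulLog_le_negMulLog_sum_add_mul_log_card {ι : Type*} (S : Finset ι)
    {p : ι → ℝ} (hp : ∀ i ∈ S, 0 ≤ p i) :
    ∑ i ∈ S, negMulLog (p i) ≤
      negMulLog (∑ i ∈ S, p i) + (∑ i ∈ S, p i) * log #S := by
  rcases S.eq_empty_or_nonempty with rfl | hS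
  · simp
  have hk : (0 : ℝ) < #S := by exact_mod_cast hS.card_pos
  have jensen := concaveOn_negMulLog.le_map_sum (t := S) (w := fun _ => (#S : ℝ)⁻¹) (p := p)
    (fun _ _ => by positivity) (by simp [hk.ne']) (fun i hi => hp i hi)
  simp only [smul_eq_mul, ← mul_sum] at jensen
  rw [mul_comm, negMulLog_mul, negMulLog, log_inv] at jensen
  have := mul_le_mul_of_nonneg_left jensen hk.le
  field_simp at this
  linarith

theorem dTV_eq_sum_filter_sub {D : Type*} [Fintype D] {p q : D → ℝ}
    (h : ∑ i, p i = ∑ i, q i) :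
    dTV p q = ∑ i with q i ≤ p i, (p i - q i) := by
  have htotal :
      ∑ i with q i ≤ p i, (p i - q i) + ∑ i with ¬q i ≤ p i, (p i - q i) = 0 := by
    rw [sum_filter_add_sum_filter_not, sum_sub_distrib, h, sub_self]
  rw [dTV, ← sum_filter_add_sum_filter_not univ (fun i => q i ≤ p i),
    sum_congr rfl fun i hi => abs_of_nonneg (sub_nonneg.2 (mem_filter.1 hi).2),
    sum_congr rfl fun i hi => abs_of_neg (sub_neg.2 (not_le.1 (mem_filter.1 hi).2)),
    sum_neg_distrib]
  linarith

theorem sum_negMulLog_le_log_card_sub_sq {D : Type*} [Fintype D] {p : D → ℝ}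
    (h0 : ∀ i, 0 ≤ p i) (h1 : ∑ i, p i = 1) {A : Finset D} (hA : 0 < #A)
    (hAc : #A < Fintype.card D) (hle : (#A : ℝ) / Fintype.card D ≤ ∑ i ∈ A, p i) :
    ∑ i, negMulLog (p i) ≤
      log (Fintype.card D) - 2 * (∑ i ∈ A, p i - #A / Fintype.card D) ^ 2 := by
  set N : ℝ := (Fintype.card D : ℝ)
  set k : ℝ := (#A : ℝ)
  set a := ∑ i ∈ A, p i
  have hk : 0 < k := Nat.cast_pos.2 hA
  have hkN : k < N := Nat.cast_lt.2 hAc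
  have hN : 0 < N := hk.trans hkN
  have hsplit := sum_add_sum_compl A p
  have hcard : (#Aᶜ : ℝ) = N - k := by rw [card_compl, Nat.cast_sub hAc.le]
  have hgroupA := sum_negMulLog_le_negMulLog_sum_add_mul_log_card A fun i _ => h0 i
  have hgroupAc := sum_negMulLog_le_negMulLog_sum_add_mul_log_card Aᶜ fun i _ => h0 i
  rw [show ∑ i ∈ Aᶜ, p i = 1 - a by linarith, hcard] at hgroupAc
  have ha1 : a ≤ 1 := by linarith [sum_nonneg fun i (_ : i ∈ Aᶜ) => h0 i]
  have hpinsker := two_mul_sq_le_binary_klDiv (div_pos hk hN) hle ha1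
  rw [log_div hk.ne' hN.ne', one_sub_div hN.ne', log_div (by linarith) hN.ne'] at hpinsker
  rw [negMulLog] at hgroupA hgroupAc
  linear_combination hgroupA + hgroupAc + hpinsker - sum_add_sum_compl A fun i => negMulLog (p i)

theorem sum_negMulLog_le_log_card_sub_sq_dTV {D : Type*} [Fintype D] {p : D → ℝ}
    (h0 : ∀ i, 0 ≤ p i) (h1 : ∑ i, p i = 1) :
    ∑ i, negMulLog (p i) ≤
      log (Fintype.card D) - 2 * dTV p (fun _ => 1 / Fintype.card D) ^ 2 := by
  set N : ℝ := (Fintype.card D : ℝ)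
  have hN : 0 < N := by
    have : Nonempty D := by
      by_contra h
      simp [not_nonempty_iff.1 h] at h1
    exact Nat.cast_pos.2 Fintype.card_pos
  have huniform : ∑ i, p i = ∑ _i : D, 1 / N := by
    rw [h1, sum_const, card_univ, nsmul_eq_mul, mul_one_div_cancel hN.ne']
  -- Coarse-grain `p` to the two-point law of the event `A`, whose mass excess over the uniform
  -- law is the total variation distance.
  set A := univ.filter fun i => 1 / N ≤ p i
  have hdTV : dTV p (fun _ => 1 / N) = ∑ i ∈ A, p i - #A / N := by
    rw [dTV_eq_sum_filter_sub huniform, sum_sub_distrib, sum_const, nsmul_eq_mul]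
    ring
  have hdTV_nonneg : 0 ≤ dTV p (fun _ => 1 / N) := by
    rw [dTV_eq_sum_filter_sub huniform]
    exact sum_nonneg fun i hi => sub_nonneg.2 (mem_filter.1 hi).2
  by_cases hA : 0 < #A ∧ #A < Fintype.card D
  · rw [hdTV]
    exact sum_negMulLog_le_log_card_sub_sq h0 h1 hA.1 hA.2 (by linarith)
  · have hdTV_zero : dTV p (fun _ => 1 / N) = 0 := by
      rw [hdTV]
      rcases not_and_or.1 hA with hA | hA
      · simp [card_eq_zero.1 (Nat.eq_zero_of_not_pos hA)]
      · rw [eq_univ_of_card A (le_antisymm (card_le_univ A) (not_lt.1 hA)), h1, card_univ,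
          div_self hN.ne', sub_self]
    have hmax := sum_negMulLog_le_negMulLog_sum_add_mul_log_card univ fun i _ => h0 i
    rw [h1, negMulLog_one, one_mul, zero_add, card_univ] at hmax
    rw [hdTV_zero]
    linarith

theorem entropy2_eq_sum_negMulLog_div {D : Type*} [Fintype D] (p : D → ℝ) :
    entropy2 p = (∑ i, negMulLog (p i)) / log 2 := by
  rw [entropy2, sum_div, ← sum_neg_distrib]
  congr 1 with i
  rw [negMulLog, logb]
  ring

theorem entropy2_le_logb_card_sub_sq_dTV {D : Type*} [Fintype D] {p : D → ℝ}
    (h0 : ∀ i, 0 ≤ p i) (h1 : ∑ i, p i = 1) :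
    entropy2 p ≤ logb 2 (Fintype.card D) - 2 * dTV p (fun _ => 1 / Fintype.card D) ^ 2 := by
  have hnats := sum_negMulLog_le_log_card_sub_sq_dTV h0 h1
  have hlog2 : log 2 < 1 := by linarith [log_two_lt_d9]
  have hbits : 2 * dTV p (fun _ => 1 / Fintype.card D) ^ 2 * log 2
      ≤ 2 * dTV p (fun _ => 1 / Fintype.card D) ^ 2 :=
    mul_le_of_le_one_right (by positivity) hlog2.le
  rw [entropy2_eq_sum_negMulLog_div, div_le_iff₀ (log_pos one_lt_two), sub_mul, logb,
    div_mul_cancel₀ _ (log_pos one_lt_two).ne']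
  linarith

theorem entropy2_le_logb_card {D : Type*} [Fintype D] {p : D → ℝ}
    (h0 : ∀ i, 0 ≤ p i) (h1 : ∑ i, p i = 1) :
    entropy2 p ≤ logb 2 (Fintype.card D) :=
  (entropy2_le_logb_card_sub_sq_dTV h0 h1).trans (sub_le_self _ (by positivity))

section empiricalDist

variable {α β γ : Type*} [DecidableEq β] [DecidableEq γ]

/-- The law of `f X` for `X` uniform on `C`. -/
noncomputable def empiricalDist (C : Finset α) (f : α → β) (b : β) : ℝ :=
  #(C.filter fun x => f x = b) / #C

variable (C : Finset α) (f : α → β)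

theorem empiricalDist_nonneg (b : β) : 0 ≤ empiricalDist C f b := by
  unfold empiricalDist; positivity

theorem sum_empiricalDist [Fintype β] {C : Finset α} (hC : C.Nonempty) (f : α → β) :
    ∑ b, empiricalDist C f b = 1 := by
  simp only [empiricalDist]
  rw [← sum_div, ← Nat.cast_sum, ← card_eq_sum_card_fiberwise fun _ _ => mem_univ _,
    div_self (Nat.cast_ne_zero.2 hC.card_pos.ne')]

theorem entropy2_empiricalDist_comp [Fintype β] [Fintype γ] {φ : β → γ}
    (hφ : Function.Injective φ) :
    entropy2 (empiricalDist C fun x => φ (f x)) = entropy2 (empiricalDist C f) := by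
  rw [entropy2, entropy2, neg_inj]
  refine (Fintype.sum_of_injective φ hφ _ _ (fun c hc => ?_) fun b => ?_).symm
  · have : C.filter (fun x => φ (f x) = c) = ∅ :=
      filter_false_of_mem fun x _ hx => hc ⟨f x, hx⟩
    simp [empiricalDist, this]
  · simp only [empiricalDist, hφ.eq_iff]

theorem empiricalDist_pair_apply (g : α → γ) (b : β) (c : γ) :
    empiricalDist C (fun x => (f x, g x)) (b, c) =
      empiricalDist C f b * empiricalDist (C.filter fun x => f x = b) g c := by
  have hsub := card_le_card (filter_subset (fun x => g x = c) (C.filter fun x => f x = b))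
  simp only [empiricalDist, Prod.mk.injEq, ← filter_filter]
  rcases Nat.eq_zero_or_pos #(C.filter fun x => f x = b) with hb | hb
  · simp [hb, Nat.le_zero.1 (hb ▸ hsub)]
  · field_simp

theorem entropy2_empiricalDist_pair [Fintype β] [Fintype γ] (g : α → γ) :
    entropy2 (empiricalDist C fun x => (f x, g x)) =
      entropy2 (empiricalDist C f) +
        ∑ b, empiricalDist C f b * entropy2 (empiricalDist (C.filter fun x => f x = b) g) := by
  have hmass : ∀ b, (∑ c, empiricalDist (C.filter fun x => f x = b) g c) *
      negMulLog (empiricalDist C f b) = negMulLog (empiricalDist C f b) := by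
    intro b
    rcases (C.filter fun x => f x = b).eq_empty_or_nonempty with hb | hb
    · simp [empiricalDist, hb]
    · rw [sum_empiricalDist hb, one_mul]
  simp only [entropy2_eq_sum_negMulLog_div, Fintype.sum_prod_type, empiricalDist_pair_apply,
    negMulLog_mul, sum_add_distrib, ← sum_mul, ← mul_sum, hmass, add_div, mul_div_assoc,
    sum_div]

theorem sum_empiricalDist_mul_le [Fintype β] {C : Finset α} (hC : C.Nonempty)
    {F : β → ℝ} {t : ℝ} (hF : ∀ b, (C.filter fun x => f x = b).Nonempty → F b ≤ t) :
    ∑ b, empiricalDist C f b * F b ≤ t :=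
  calc ∑ b, empiricalDist C f b * F b ≤ ∑ b, empiricalDist C f b * t := by
        refine sum_le_sum fun b _ => ?_
        rcases (C.filter fun x => f x = b).eq_empty_or_nonempty with hb | hb
        · simp [empiricalDist, hb]
        · exact mul_le_mul_of_nonneg_left (hF b hb) (empiricalDist_nonneg C f b)
    _ = t := by rw [← sum_mul, sum_empiricalDist hC, one_mul]

end empiricalDist

theorem logb_two_card_fin_fun_bool (k : ℕ) : logb 2 (Fintype.card (Fin k → Bool)) = k := by
  simp [logb_pow]

theorem entropy2_le_sub_sq_of_le_dTV_uniform {s : ℕ} {p : (Fin s → Bool) → ℝ}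
    (h0 : ∀ w, 0 ≤ p w) (h1 : ∑ w, p w = 1) {δ : ℝ} (hδ : 0 ≤ δ)
    (hd : δ ≤ dTV p fun _ => 1 / 2 ^ s) :
    entropy2 p ≤ s - 2 * δ ^ 2 := by
  have h := entropy2_le_logb_card_sub_sq_dTV h0 h1
  rw [logb_two_card_fin_fun_bool] at h
  simp only [Fintype.card_fun, Fintype.card_bool, Fintype.card_fin, Nat.cast_pow,
    Nat.cast_ofNat] at h
  nlinarith

theorem injective_prefix_suffix {α : Type*} {m q : ℕ} (hmq : m ≤ q) :
    Function.Injective fun v : Fin q → α =>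
      ((fun k : Fin m => v ⟨k, lt_of_lt_of_le k.2 hmq⟩),
        fun k : Fin (q - m) => v ⟨m + k, by omega⟩) := by
  intro v v' h
  simp only [Prod.mk.injEq] at h
  funext i
  by_cases hi : i < m
  · exact congrFun h.1 ⟨i, hi⟩
  · simpa [Nat.add_sub_cancel' (not_lt.1 hi)] using congrFun h.2 ⟨i - m, by omega⟩

/-- let `C' ⊆ {0,1}^n`, `J ⊆ [n]`, and let `r` be a `q`-reader whose first
`|J|` reads are coordinates of `J`.  For each prefix value `y`, let `X_y` be uniform on the
codewords of `C'` whose reading has prefix `y`.  If for each attained `y` the distribution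
of the last `q − |J|` read values of `X_y` is at total variation distance `≥ 1/8` from
uniform on `{0,1}^{q−|J|}`, then for `X` uniform on `C'`, the entropy of the `q` read values
of `X` is at most `q − 1/32`. -/
theorem stmt19 {n q : ℕ} (J : Finset (Fin n)) (hJq : J.card ≤ q)
    (r : (i : Fin q) → (Fin (i : ℕ) → Bool) → Fin n)
    (C' : Finset (Fin n → Bool)) (hC' : C'.Nonempty)
    (hdisc : ∀ y : Fin J.card → Bool,
      (C'.filter fun x =>
          (fun k : Fin J.card => readB r x ⟨k.1, lt_of_lt_of_le k.2 hJq⟩) = y).Nonempty →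
      (1 : ℝ) / 8 ≤ dTV
        (fun w : Fin (q - J.card) → Bool =>
          ((C'.filter fun x =>
              (fun k : Fin J.card => readB r x ⟨k.1, lt_of_lt_of_le k.2 hJq⟩) = y ∧
              (fun k : Fin (q - J.card) =>
                readB r x ⟨J.card + k.1, by have := k.2; omega⟩) = w).card : ℝ) /
            ((C'.filter fun x =>
              (fun k : Fin J.card => readB r x ⟨k.1, lt_of_lt_of_le k.2 hJq⟩) = y).card : ℝ))
        (fun _ => 1 / 2 ^ (q - J.card))) :
    entropy2 (fun v : Fin q → Bool =>
        ((C'.filter fun x => readB r x = v).card : ℝ) / (C'.card : ℝ)) ≤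
      (q : ℝ) - 1 / 32 := by
  let pre : (Fin q → Bool) → Fin J.card → Bool := fun v k => v ⟨k, lt_of_lt_of_le k.2 hJq⟩
  let suf : (Fin q → Bool) → Fin (q - J.card) → Bool :=
    fun v k => v ⟨J.card + k, by omega⟩
  have hsuffix : ∀ y, (C'.filter fun x => pre (readB r x) = y).Nonempty →
      entropy2 (empiricalDist (C'.filter fun x => pre (readB r x) = y) fun x => suf (readB r x))
        ≤ (q - J.card : ℕ) - 2 * (1 / 8) ^ 2 := by
    intro y hy
    refine entropy2_le_sub_sq_of_le_dTV_uniform (empiricalDist_nonneg _ _)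
      (sum_empiricalDist hy _) (by norm_num) ?_
    convert hdisc y hy using 3
    simp only [empiricalDist, filter_filter]
    rfl
  calc entropy2 (empiricalDist C' (readB r))
      = entropy2 (empiricalDist C' fun x => (pre (readB r x), suf (readB r x))) :=
        (entropy2_empiricalDist_comp C' _ (injective_prefix_suffix hJq)).symm
    _ = entropy2 (empiricalDist C' fun x => pre (readB r x)) +
          ∑ y, empiricalDist C' (fun x => pre (readB r x)) y *
            entropy2 (empiricalDist (C'.filter fun x => pre (readB r x) = y)
              fun x => suf (readB r x)) :=
        entropy2_empiricalDist_pair C' _ _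
    _ ≤ J.card + ((q - J.card : ℕ) - 2 * (1 / 8) ^ 2) := by
        gcongr
        · exact (entropy2_le_logb_card (empiricalDist_nonneg C' fun x => pre (readB r x))
            (sum_empiricalDist hC' _)).trans_eq (logb_two_card_fin_fun_bool _)
        · exact sum_empiricalDist_mul_le _ hC' hsuffix
    _ = q - 1 / 32 := by push_cast [hJq]; ring
end
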